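/- Let n = 1, α < 0, σ > 0, p ≥ 0, and let f : ℝ → ℝ be continuous. Define P(t,x,u) = f(u/α)/(|α|σ√(2πt)·|u|^p) · exp(-(u(1/α + t) - x)²/(2σ²t|u|^{2p})) for t > 0 and u ≠ 0. Then for each fixed u ≠ 0, P satisfies the PDE ∂ₜP = -u ∂ₓP + (σ²|u|^{2p}/2) ∂ₓₓP on t > 0, x ∈ ℝ. -/

import Mathlib

/-!
For fixed `u ≠ 0` the kernel is the constant `f (u / α) / (|α| σ |u|^p)` times a Gaussian in `x`
whose mean `u / α + u t` moves with speed `u` and whose variance `D t`, `D = σ² |u|^(2p)`, grows at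
rate `D`. Such a Gaussian solves `∂ₜG = -u ∂ₓG + (D / 2) ∂ₓₓG`: writing `w` for the mean minus `x`,
`∂ₓG`, `∂ₓₓG` and `∂ₜG` are `G` times `w / (D t)`, `(w / (D t))² - 1 / (D t)` and
`-1 / (2 t) - u w / (D t) + w² / (2 D t²)`.
-/

open Real

theorem hasDerivAt_inv_sqrt {x : ℝ} (hx : 0 < x) :
    HasDerivAt (fun y => (√y)⁻¹) (-(√x)⁻¹ / (2 * x)) x := by
  have hs : √x ≠ 0 := (sqrt_pos.mpr hx).ne'
  refine ((hasDerivAt_sqrt hx.ne').inv hs).congr_deriv ?_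
  field_simp
  rw [sq_sqrt hx.le]

/-- The normalisation omits the factor `√D`, as the kernel of the theorem does. -/
noncomputable def driftGaussian (a v D t y : ℝ) : ℝ :=
  (√(2 * π * t))⁻¹ * exp (-(a + v * t - y) ^ 2 / (2 * D * t))

namespace driftGaussian

variable {a v D : ℝ}

theorem hasDerivAt_space (t y : ℝ) :
    HasDerivAt (driftGaussian a v D t)
      (driftGaussian a v D t y * ((a + v * t - y) / (D * t))) y := by
  have hexp : HasDerivAt (fun z => -(a + v * t - z) ^ 2 / (2 * D * t))
      ((a + v * t - y) / (D * t)) y := by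
    refine ((((hasDerivAt_id' y).const_sub (a + v * t)).fun_pow 2).fun_neg.div_const _
      ).congr_deriv ?_
    ring
  refine (hexp.exp.const_mul _).congr_deriv ?_
  rw [driftGaussian]
  ring

theorem deriv_space (t : ℝ) :
    deriv (driftGaussian a v D t) =
      fun y => driftGaussian a v D t y * ((a + v * t - y) / (D * t)) :=
  funext fun y => (hasDerivAt_space t y).deriv

theorem hasDerivAt_deriv_space (t y : ℝ) :
    HasDerivAt (deriv (driftGaussian a v D t))
      (driftGaussian a v D t y * (((a + v * t - y) / (D * t)) ^ 2 - 1 / (D * t))) y := by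
  rw [deriv_space]
  refine ((hasDerivAt_space t y).mul
    (((hasDerivAt_id' y).const_sub _).div_const _)).congr_deriv ?_
  ring

theorem hasDerivAt_time (hD : D ≠ 0) {t : ℝ} (ht : 0 < t) (y : ℝ) :
    HasDerivAt (fun s => driftGaussian a v D s y)
      (driftGaussian a v D t y * (-1 / (2 * t) - (a + v * t - y) * v / (D * t)
        + (a + v * t - y) ^ 2 / (2 * D * t ^ 2))) t := by
  have hsqrt : HasDerivAt (fun s => (√(2 * π * s))⁻¹) (-(√(2 * π * t))⁻¹ / (2 * t)) t := by
    have := (hasDerivAt_inv_sqrt (by positivity : 0 < 2 * π * t)).comp t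
      ((hasDerivAt_id' t).const_mul (2 * π))
    refine this.congr_deriv ?_
    field_simp
  have hexp : HasDerivAt (fun s => -(a + v * s - y) ^ 2 / (2 * D * s))
      (-(a + v * t - y) * v / (D * t) + (a + v * t - y) ^ 2 / (2 * D * t ^ 2)) t := by
    have hw : HasDerivAt (fun s => a + v * s - y) v t := by
      simpa using (((hasDerivAt_id' t).const_mul v).const_add a).sub_const y
    refine ((hw.fun_pow 2).fun_neg.div ((hasDerivAt_id' t).const_mul (2 * D))
      (by simp [hD, ht.ne'])).congr_deriv ?_
    field_simp
    ring
  refine (hsqrt.mul hexp.exp).congr_deriv ?_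
  simp only [driftGaussian]
  ring

theorem fokkerPlanck (hD : D ≠ 0) {t : ℝ} (ht : 0 < t) (x : ℝ) :
    deriv (fun s => driftGaussian a v D s x) t =
      -v * deriv (driftGaussian a v D t) x +
        D / 2 * deriv (deriv (driftGaussian a v D t)) x := by
  rw [(hasDerivAt_time hD ht x).deriv, (hasDerivAt_space t x).deriv,
    (hasDerivAt_deriv_space t x).deriv]
  field_simp
  ring

end driftGaussian

theorem fokker_planck_explicit_solution_general (α σ p : ℝ) (hσ : 0 < σ)
    (f : ℝ → ℝ)
    (P : ℝ → ℝ → ℝ → ℝ)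
    (hP : ∀ t x u : ℝ, P t x u =
      f (u / α) / (|α| * σ * Real.sqrt (2 * π * t) * |u| ^ p) *
        Real.exp (-(u * (1 / α + t) - x) ^ 2 / (2 * σ ^ 2 * t * |u| ^ (2 * p)))) :
    ∀ t x u : ℝ, 0 < t → u ≠ 0 →
      deriv (fun s => P s x u) t =
        -u * deriv (fun y => P t y u) x +
          σ ^ 2 * |u| ^ (2 * p) / 2 * deriv (fun y => deriv (fun z => P t z u) y) x := by
  intro t x u ht hu
  set D := σ ^ 2 * |u| ^ (2 * p)
  have hD : D ≠ 0 := by positivity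
  set K := f (u / α) / (|α| * σ * |u| ^ p)
  have hPK : ∀ s, (fun y => P s y u) = fun y => K * driftGaussian (u / α) u D s y := by
    intro s; funext y
    rw [hP, driftGaussian, show u * (1 / α + s) = u / α + u * s by ring,
      show 2 * σ ^ 2 * s * |u| ^ (2 * p) = 2 * D * s by ring]
    simp only [K, div_eq_mul_inv, mul_inv]
    ring
  have hPK' : (fun s => P s x u) = fun s => K * driftGaussian (u / α) u D s x :=
    funext fun s => congrFun (hPK s) x
  simp only [hPK, hPK', deriv_const_mul_field', driftGaussian.fokkerPlanck hD ht]
  ring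

/-- In dimension `n = 1` with `β = 0`, the kernel
`P(t,x,u) = f(u/α)/(|α|σ√(2πt)·|u|^p) · exp(-(u(1/α+t)-x)²/(2σ²t|u|^{2p}))`
satisfies the Fokker–Planck equation `∂ₜP = -u ∂ₓP + (σ²|u|^{2p}/2) ∂ₓₓP`
for `t > 0`, `x ∈ ℝ`, and each fixed `u ≠ 0`. -/
theorem fokker_planck_explicit_solution (α σ p : ℝ) (hα : α < 0) (hσ : 0 < σ)
    (hp : 0 ≤ p) (f : ℝ → ℝ) (hf : Continuous f)
    (P : ℝ → ℝ → ℝ → ℝ)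
    (hP : ∀ t x u : ℝ, P t x u =
      f (u / α) / (|α| * σ * Real.sqrt (2 * π * t) * |u| ^ p) *
        Real.exp (-(u * (1 / α + t) - x) ^ 2 / (2 * σ ^ 2 * t * |u| ^ (2 * p)))) :
    ∀ t x u : ℝ, 0 < t → u ≠ 0 →
      deriv (fun s => P s x u) t =
        -u * deriv (fun y => P t y u) x +
          σ ^ 2 * |u| ^ (2 * p) / 2 * deriv (fun y => deriv (fun z => P t z u) y) x :=
  fokker_planck_explicit_solution_general α σ p hσ f P hP
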